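/- Lanczos restart recovery: Let A be an n×n Hermitian complex matrix, let m ≥ k ≥ 1, set N = m+1+k, and let (V_N, T_N, β_N, v_{N+1}) be a Lanczos relation of length N for A with starting vector v_1; denote by v_1, …, v_{N+1} the Lanczos vectors. Let T^{(m+1,k)} be the (2k+1)×(2k+1) principal submatrix of T_N consisting of rows and columns m+1−k through m+1+k. Suppose (Ṽ_k, T̃_k, β̃_k, w̃) is a Lanczos relation of length k for the Hermitian matrix T^{(m+1,k)} with starting vector e_{k+1} ∈ ℝ^{2k+1}, and suppose (W_k, T_k^r, β_k^r, w) is a Lanczos relation of length k for A with starting vector v_{m+1}. Then T_k^r = T̃_k and β_k^r = β̃_k; i.e., the tridiagonal matrix of the restarted Lanczos process for A started at v_{m+1} coincides with the tridiagonal matrix obtained by running the Lanczos process on the window matrix T^{(m+1,k)} started at e_{k+1}. -/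

import Mathlib

open Matrix

/-- A Lanczos relation of length `k` for an `n × n` Hermitian matrix `A` over `𝕜`
with starting unit vector `v`: orthonormal columns `V` with first column `v`, a real
symmetric tridiagonal matrix `T` with positive subdiagonal, `β > 0` and a unit vector
`vNext` orthogonal to the columns of `V`, such that `A V = V T + β vNext eₖ*`. -/
structure LanczosRelation (𝕜 : Type) [RCLike 𝕜] (n k : ℕ)
    (A : Matrix (Fin n) (Fin n) 𝕜) (v : Fin n → 𝕜) where
  kpos : 0 < k
  V : Matrix (Fin n) (Fin k) 𝕜
  T : Matrix (Fin k) (Fin k) ℝ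
  β : ℝ
  vNext : Fin n → 𝕜
  orthonormal : Vᴴ * V = 1
  firstCol : (fun i => V i ⟨0, kpos⟩) = v
  symm : T.IsHermitian
  tridiag : ∀ i j : Fin k, (i : ℕ) + 1 < (j : ℕ) → T i j = 0
  subdiag_pos : ∀ (i : ℕ) (h : i + 1 < k), 0 < T ⟨i + 1, h⟩ ⟨i, by omega⟩
  β_pos : 0 < β
  vNext_unit : star vNext ⬝ᵥ vNext = 1
  vNext_orth : Vᴴ *ᵥ vNext = 0
  relation : A * V = V * T.map (algebraMap ℝ 𝕜) +
      (algebraMap ℝ 𝕜 β) • vecMulVec vNext (Pi.single ⟨k - 1, by omega⟩ 1)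

/-!
Write `U` for the `n × (2k+1)` block of Lanczos vectors `v_{m+1-k}, …, v_{m+1+k}`. Since `T_N` is
tridiagonal, the `j`-th Lanczos vector of the window matrix `T^{(m+1,k)}` started at `e_{k+1}`
is supported on the rows `k+1-j, …, k+1+j`; for `j < k` it therefore vanishes on the first and
last rows of the window, which are the only columns where `A U` differs from `U T^{(m+1,k)}`.
Hence `U Ṽ_k`, `T̃_k`, `β̃_k`, `U w̃` form a Lanczos relation for `A` started at `v_{m+1}`.
Finally, a Lanczos relation is determined by `A` and its starting vector (each new Lanczos vector
is the normalised residual of the previous ones), so `T_k^r = T̃_k` and `β_k^r = β̃_k`.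
-/

def Matrix.IsTridiagonal {R : Type*} [Zero R] {n : ℕ} (M : Matrix (Fin n) (Fin n) R) : Prop :=
  ∀ i j : Fin n, (i : ℕ) + 1 < j ∨ (j : ℕ) + 1 < i → M i j = 0

theorem Matrix.IsTridiagonal.submatrix {R : Type*} [Zero R] {N p s : ℕ}
    {M : Matrix (Fin N) (Fin N) R} (hM : M.IsTridiagonal) {f : Fin p → Fin N}
    (hf : ∀ i, (f i : ℕ) = s + i) : (M.submatrix f f).IsTridiagonal :=
  fun i j h => hM (f i) (f j) (by rw [hf, hf]; omega)

theorem Matrix.conjTranspose_mul_self_submatrix {α m n p : Type*} [CommSemiring α] [StarRing α]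
    [Fintype m] [Fintype n] [Fintype p] [DecidableEq n] [DecidableEq p] {V : Matrix m n α}
    (hV : Vᴴ * V = 1) {f : p → n} (hf : Function.Injective f) :
    (V.submatrix id f)ᴴ * V.submatrix id f = 1 := by
  rw [conjTranspose_submatrix, ← submatrix_mul _ _ _ _ _ Function.bijective_id, hV,
    submatrix_one _ hf]

theorem Fin.injective_of_val_eq_add {N p s : ℕ} {f : Fin p → Fin N}
    (hf : ∀ i, (f i : ℕ) = s + i) : Function.Injective f := fun a b h => by
  have ha := hf a
  rw [h, hf b] at ha
  exact Fin.ext (by omega)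

theorem Fin.val_eq_zero_or_exists_val_eq_succ {k : ℕ} (j : Fin k) :
    (j : ℕ) = 0 ∨ ∃ i : Fin k, (j : ℕ) = i + 1 := by
  rcases Nat.eq_zero_or_eq_succ_pred (j : ℕ) with h | h
  · exact .inl h
  · exact .inr ⟨⟨(j : ℕ) - 1, by omega⟩, h⟩

theorem RCLike.semiconj_algebraMap_star (𝕜 : Type*) [RCLike 𝕜] :
    Function.Semiconj (algebraMap ℝ 𝕜) star star := fun x => by simp

theorem eq_of_ofReal_smul_eq_of_unit {𝕜 ι : Type*} [RCLike 𝕜] [Fintype ι] {a b : ℝ}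
    {x y : ι → 𝕜} (ha : 0 < a) (hb : 0 < b) (hx : star x ⬝ᵥ x = 1) (hy : star y ⬝ᵥ y = 1)
    (h : (a : 𝕜) • x = (b : 𝕜) • y) : a = b ∧ x = y := by
  have hsq (c : ℝ) (z : ι → 𝕜) (hz : star z ⬝ᵥ z = 1) :
      star ((c : 𝕜) • z) ⬝ᵥ ((c : 𝕜) • z) = ((c ^ 2 : ℝ) : 𝕜) := by
    rw [star_smul, smul_dotProduct, dotProduct_smul, hz, RCLike.star_def, RCLike.conj_ofReal]
    simp [sq]
  have hab : a ^ 2 = b ^ 2 := by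
    exact_mod_cast (hsq a x hx).symm.trans (h ▸ hsq b y hy)
  obtain rfl : a = b := by nlinarith
  exact ⟨rfl, smul_right_injective _ (RCLike.ofReal_ne_zero.2 ha.ne') h⟩

namespace LanczosRelation

section

variable {𝕜 : Type} [RCLike 𝕜] {n k : ℕ} {A : Matrix (Fin n) (Fin n) 𝕜} {v : Fin n → 𝕜}
  (L : LanczosRelation 𝕜 n k A v)

theorem isTridiagonal_T : L.T.IsTridiagonal := by
  rintro i j (h | h)
  · exact L.tridiag i j h
  · rw [← L.symm.apply, star_trivial, L.tridiag j i h]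

theorem T_pos_of_val_eq_succ (i j : Fin k) (hij : (j : ℕ) = i + 1) : 0 < L.T j i := by
  obtain ⟨i, hi⟩ := i
  obtain ⟨j, hj⟩ := j
  obtain rfl : j = i + 1 := hij
  exact L.subdiag_pos i hj

theorem col_zero : L.V.col ⟨0, L.kpos⟩ = v := L.firstCol

theorem star_col_dotProduct_col (i j : Fin k) :
    star (L.V.col i) ⬝ᵥ L.V.col j = (1 : Matrix (Fin k) (Fin k) 𝕜) i j := by
  rw [← L.orthonormal]; rfl

theorem star_col_dotProduct_self (j : Fin k) : star (L.V.col j) ⬝ᵥ L.V.col j = 1 := by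
  rw [L.star_col_dotProduct_col, Matrix.one_apply_eq]

theorem mulVec_col_of_lt (j : Fin k) (hj : (j : ℕ) + 1 < k) :
    A *ᵥ L.V.col j = ∑ l, (L.T l j : 𝕜) • L.V.col l := by
  ext i
  have h := congrFun (congrFun L.relation i) j
  have hne : j ≠ ⟨k - 1, by omega⟩ := fun h => by simp [Fin.ext_iff] at h; omega
  simp [Matrix.mul_apply, vecMulVec_apply, hne] at h
  simpa [mulVec, dotProduct, Finset.sum_apply, RCLike.real_smul_eq_coe_mul, mul_comm] using h

theorem conjTranspose_V_mul_mul_V : L.Vᴴ * A * L.V = L.T.map (algebraMap ℝ 𝕜) := by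
  rw [Matrix.mul_assoc, L.relation, Matrix.mul_add, ← Matrix.mul_assoc, L.orthonormal,
    Matrix.one_mul, Matrix.mul_smul, mul_vecMulVec, L.vNext_orth, zero_vecMulVec, smul_zero,
    add_zero]

theorem star_col_dotProduct_mulVec_col (i j : Fin k) :
    star (L.V.col i) ⬝ᵥ (A *ᵥ L.V.col j) = L.T i j := by
  have h := congrFun (congrFun L.conjTranspose_V_mul_mul_V i) j
  rw [Matrix.mul_assoc] at h
  exact h

theorem smul_col_succ_eq (i j : Fin k) (hij : (j : ℕ) = i + 1) :
    (L.T j i : 𝕜) • L.V.col j = A *ᵥ L.V.col i -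
      ∑ l ∈ Finset.Iio j, (star (L.V.col l) ⬝ᵥ (A *ᵥ L.V.col i)) • L.V.col l := by
  simp only [L.star_col_dotProduct_mulVec_col]
  rw [L.mulVec_col_of_lt i (by omega), ← Finset.sum_add_sum_compl (Finset.Iio j),
    Finset.sum_eq_single_of_mem (s := (Finset.Iio j)ᶜ) j (by simp), add_sub_cancel_left]
  intro l hl hlj
  simp only [Finset.mem_compl, Finset.mem_Iio, not_lt] at hl
  rw [L.isTridiagonal_T l i (.inr (by omega)), RCLike.ofReal_zero, zero_smul]

theorem smul_vNext_eq : (L.β : 𝕜) • L.vNext =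
    (A * L.V - L.V * L.T.map (algebraMap ℝ 𝕜)).col ⟨k - 1, by have := L.kpos; omega⟩ := by
  rw [L.relation, add_sub_cancel_left]
  ext i
  simp [vecMulVec_apply, RCLike.real_smul_eq_coe_mul]

theorem V_eq (L₁ L₂ : LanczosRelation 𝕜 n k A v) : L₁.V = L₂.V := by
  refine Matrix.ext_col fun j => ?_
  induction j using WellFoundedLT.induction with
  | _ j ih =>
    obtain h0 | ⟨i, hij⟩ := j.val_eq_zero_or_exists_val_eq_succ
    · obtain rfl : j = ⟨0, L₁.kpos⟩ := Fin.ext h0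
      exact L₁.col_zero.trans L₂.col_zero.symm
    · have hsmul := L₁.smul_col_succ_eq i j hij
      rw [ih i (by simp [Fin.lt_def, hij]), Finset.sum_congr rfl fun l hl =>
        by rw [ih l (Finset.mem_Iio.1 hl)], ← L₂.smul_col_succ_eq i j hij] at hsmul
      exact (eq_of_ofReal_smul_eq_of_unit (L₁.T_pos_of_val_eq_succ i j hij)
        (L₂.T_pos_of_val_eq_succ i j hij) (L₁.star_col_dotProduct_self j)
        (L₂.star_col_dotProduct_self j) hsmul).2

theorem T_eq (L₁ L₂ : LanczosRelation 𝕜 n k A v) : L₁.T = L₂.T :=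
  Matrix.map_injective (algebraMap ℝ 𝕜).injective <| by
    simp only [← conjTranspose_V_mul_mul_V, V_eq L₁ L₂]

theorem β_eq (L₁ L₂ : LanczosRelation 𝕜 n k A v) : L₁.β = L₂.β :=
  (eq_of_ofReal_smul_eq_of_unit L₁.β_pos L₂.β_pos L₁.vNext_unit L₂.vNext_unit <| by
    rw [smul_vNext_eq, smul_vNext_eq, V_eq L₁ L₂, T_eq L₁ L₂]).1

theorem V_eq_zero_of_lt_dist (hA : A.IsTridiagonal) {c : Fin n}
    (L : LanczosRelation 𝕜 n k A (Pi.single c 1)) (r : Fin n) (j : Fin k)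
    (hrj : (r : ℕ) + j < c ∨ (c : ℕ) + j < r) : L.V r j = 0 := by
  induction j using WellFoundedLT.induction generalizing r with
  | _ j ih =>
    obtain h0 | ⟨i, hij⟩ := j.val_eq_zero_or_exists_val_eq_succ
    · obtain rfl : j = ⟨0, L.kpos⟩ := Fin.ext h0
      rw [← L.V.col_apply, L.col_zero, Pi.single_eq_of_ne]
      rintro rfl
      omega
    · have hAcol : (A *ᵥ L.V.col i) r = 0 := by
        rw [mulVec, dotProduct]
        refine Finset.sum_eq_zero fun q _ => ?_
        by_cases hrq : (r : ℕ) + 1 < q ∨ (q : ℕ) + 1 < r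
        · rw [hA r q hrq, zero_mul]
        · rw [Matrix.col_apply, ih i (by simp [Fin.lt_def, hij]) q (by omega), mul_zero]
      have hrow := congrFun (L.smul_col_succ_eq i j hij) r
      simp only [Pi.smul_apply, Pi.sub_apply, Finset.sum_apply, smul_eq_mul, hAcol,
        Matrix.col_apply] at hrow
      rw [Finset.sum_eq_zero fun l hl => by
        rw [ih l (Finset.mem_Iio.1 hl) r (by have := Fin.lt_def.1 (Finset.mem_Iio.1 hl); omega),
          mul_zero],
        sub_zero, mul_eq_zero] at hrow
      exact hrow.resolve_left (RCLike.ofReal_ne_zero.2 (L.T_pos_of_val_eq_succ i j hij).ne')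

theorem mul_submatrix_col_eq {p s : ℕ} {f : Fin p → Fin k} (hf : ∀ i, (f i : ℕ) = s + i)
    (l : Fin p) (hl₀ : 0 < (l : ℕ)) (hl : (l : ℕ) + 1 < p) :
    (A * L.V.submatrix id f).col l =
      (L.V.submatrix id f * (L.T.submatrix f f).map (algebraMap ℝ 𝕜)).col l := by
  have hfl : (f ⟨l + 1, hl⟩ : ℕ) = s + l + 1 := hf _
  have hlt := (f ⟨l + 1, hl⟩).isLt
  have hcol : (A * L.V.submatrix id f).col l = A *ᵥ L.V.col (f l) := rfl
  rw [hcol, L.mulVec_col_of_lt (f l) (by rw [hf]; omega), ← mulVec_single_one,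
    ← mulVec_mulVec, mulVec_single_one, mulVec_eq_sum]
  refine (Fintype.sum_of_injective f (Fin.injective_of_val_eq_add hf) _ _ ?_ ?_).symm
  · intro q hq
    have hfl₀ := hf l
    rw [L.isTridiagonal_T q (f l), RCLike.ofReal_zero, zero_smul]
    by_contra hnear
    exact hq ⟨⟨q - s, by omega⟩, Fin.ext (by rw [hf, Fin.val_mk]; omega)⟩
  · intro l'
    rw [op_smul_eq_smul]
    rfl

theorem mul_submatrix_mul_eq {p q s : ℕ} {f : Fin p → Fin k} (hf : ∀ i, (f i : ℕ) = s + i)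
    (X : Matrix (Fin p) (Fin q) 𝕜)
    (hX : ∀ (l : Fin p) (j : Fin q), (l : ℕ) = 0 ∨ (l : ℕ) + 1 = p → X l j = 0) :
    A * L.V.submatrix id f * X =
      L.V.submatrix id f * (L.T.submatrix f f).map (algebraMap ℝ 𝕜) * X := by
  ext i j
  rw [mul_apply, mul_apply]
  refine Finset.sum_congr rfl fun l _ => ?_
  by_cases hl : 0 < (l : ℕ) ∧ (l : ℕ) + 1 < p
  · rw [← col_apply (A * _), L.mul_submatrix_col_eq hf l hl.1 hl.2, col_apply]
  · rw [hX l j (by omega), mul_zero, mul_zero]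

end

noncomputable def baseChange {n k : ℕ} {A : Matrix (Fin n) (Fin n) ℝ} {v : Fin n → ℝ}
    (L : LanczosRelation ℝ n k A v) (𝕜 : Type) [RCLike 𝕜] :
    LanczosRelation 𝕜 n k (A.map (algebraMap ℝ 𝕜)) (algebraMap ℝ 𝕜 ∘ v) where
  kpos := L.kpos
  V := L.V.map (algebraMap ℝ 𝕜)
  T := L.T
  β := L.β
  vNext := algebraMap ℝ 𝕜 ∘ L.vNext
  orthonormal := by
    rw [← conjTranspose_map _ (RCLike.semiconj_algebraMap_star 𝕜), ← Matrix.map_mul,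
      L.orthonormal, Matrix.map_one _ (map_zero _) (map_one _)]
  firstCol := funext fun i => congrArg _ (congrFun L.firstCol i)
  symm := L.symm
  tridiag := L.tridiag
  subdiag_pos := L.subdiag_pos
  β_pos := L.β_pos
  vNext_unit := by
    have hstar : star (algebraMap ℝ 𝕜 ∘ L.vNext) = algebraMap ℝ 𝕜 ∘ star L.vNext :=
      funext fun i => (RCLike.semiconj_algebraMap_star 𝕜 (L.vNext i)).symm
    rw [hstar, ← RingHom.map_dotProduct, L.vNext_unit, map_one]
  vNext_orth := by
    ext j
    rw [← conjTranspose_map _ (RCLike.semiconj_algebraMap_star 𝕜), ← RingHom.map_mulVec,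
      L.vNext_orth]
    simp
  relation := by
    rw [← Matrix.map_mul, L.relation]
    ext i j
    simp [Matrix.mul_apply, vecMulVec_apply, Pi.single_apply, apply_ite (algebraMap ℝ 𝕜)]

def pushforward {𝕜 : Type} [RCLike 𝕜] {n p k : ℕ} {B : Matrix (Fin p) (Fin p) 𝕜}
    {w : Fin p → 𝕜} (L : LanczosRelation 𝕜 p k B w) {A : Matrix (Fin n) (Fin n) 𝕜}
    (U : Matrix (Fin n) (Fin p) 𝕜) (hU : Uᴴ * U = 1) (hAU : A * U * L.V = U * B * L.V)
    {v : Fin n → 𝕜} (hv : U *ᵥ w = v) : LanczosRelation 𝕜 n k A v where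
  kpos := L.kpos
  V := U * L.V
  T := L.T
  β := L.β
  vNext := U *ᵥ L.vNext
  orthonormal := by
    rw [conjTranspose_mul, Matrix.mul_assoc, ← Matrix.mul_assoc Uᴴ, hU, Matrix.one_mul,
      L.orthonormal]
  firstCol := by
    change (U * L.V).col ⟨0, L.kpos⟩ = v
    rw [← hv, ← mulVec_single_one, ← mulVec_mulVec, mulVec_single_one, L.col_zero]
  symm := L.symm
  tridiag := L.tridiag
  subdiag_pos := L.subdiag_pos
  β_pos := L.β_pos
  vNext_unit := by
    rw [star_mulVec, dotProduct_mulVec, vecMul_vecMul, hU, vecMul_one, L.vNext_unit]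
  vNext_orth := by
    rw [conjTranspose_mul, mulVec_mulVec, Matrix.mul_assoc, hU, Matrix.mul_one, L.vNext_orth]
  relation := by
    rw [← Matrix.mul_assoc, hAU, Matrix.mul_assoc, L.relation, Matrix.mul_add,
      ← Matrix.mul_assoc, Matrix.mul_smul, mul_vecMulVec]

end LanczosRelation

theorem lanczos_restart_recovery
    {n m k : ℕ} (hmk : k ≤ m)
    {A : Matrix (Fin n) (Fin n) ℂ}
    {v₁ : Fin n → ℂ} (L : LanczosRelation ℂ n (m + 1 + k) A v₁)
    (W : Matrix (Fin (2 * k + 1)) (Fin (2 * k + 1)) ℝ)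
    (hW : W = L.T.submatrix
        (fun i : Fin (2 * k + 1) => (⟨m - k + i, by omega⟩ : Fin (m + 1 + k)))
        (fun i : Fin (2 * k + 1) => (⟨m - k + i, by omega⟩ : Fin (m + 1 + k))))
    (Lwin : LanczosRelation ℝ (2 * k + 1) k W
        (Pi.single (⟨k, by omega⟩ : Fin (2 * k + 1)) 1))
    (Lres : LanczosRelation ℂ n k A (fun i => L.V i ⟨m, by omega⟩)) :
    Lres.T = Lwin.T ∧ Lres.β = Lwin.β := by
  subst hW
  let f : Fin (2 * k + 1) → Fin (m + 1 + k) := fun i => ⟨m - k + i, by omega⟩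
  have hf : ∀ i, (f i : ℕ) = m - k + i := fun _ => rfl
  have hedge : ∀ (l : Fin (2 * k + 1)) (j : Fin k),
      (l : ℕ) = 0 ∨ (l : ℕ) + 1 = 2 * k + 1 → (Lwin.baseChange ℂ).V l j = 0 := fun l j hl => by
    have hfar : (l : ℕ) + j < k ∨ k + j < l := by omega
    simp [LanczosRelation.baseChange,
      Lwin.V_eq_zero_of_lt_dist (L.isTridiagonal_T.submatrix hf) l j hfar]
  have hstart : L.V.submatrix id f *ᵥ (algebraMap ℝ ℂ ∘ Pi.single ⟨k, by omega⟩ 1) =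
      fun i => L.V i ⟨m, by omega⟩ := by
    ext i
    simp [mulVec, dotProduct, Pi.single_apply, f, apply_ite ((↑) : ℝ → ℂ),
      Nat.sub_add_cancel hmk]
  let Lc := (Lwin.baseChange ℂ).pushforward (L.V.submatrix id f)
    (conjTranspose_mul_self_submatrix L.orthonormal (Fin.injective_of_val_eq_add hf))
    (L.mul_submatrix_mul_eq hf _ hedge) hstart
  exact ⟨Lres.T_eq Lc, Lres.β_eq Lc⟩
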